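/- For h(X) := max{‖X‖, |X₁|/ε} on ℂ² with 0 < ε < 1/√2 (where ‖·‖ is the Euclidean norm), the Wu norm satisfies 𝕎h(0,1) < √2 = 𝕎‖·‖(0,1). In particular, h ≥ ‖·‖ pointwise does not imply 𝕎h ≥ 𝕎‖·‖, so the Wu operation is not monotone. -/

import Mathlib

noncomputable section

open MeasureTheory Complex
open scoped ComplexConjugate

abbrev Cn (n : ℕ) := EuclideanSpace ℂ (Fin n)

instance {n : ℕ} : InnerProductSpace ℝ (Cn n) := InnerProductSpace.rclikeToReal ℂ _
instance {n : ℕ} : MeasurableSpace (Cn n) := borel _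
instance {n : ℕ} : BorelSpace (Cn n) := ⟨rfl⟩

/-- A ℂ-seminorm on ℂⁿ. -/
structure IsCSeminorm {n : ℕ} (h : Cn n → ℝ) : Prop where
  nonneg : ∀ X, 0 ≤ h X
  add_le : ∀ X Y, h (X + Y) ≤ h X + h Y
  smul : ∀ (t : ℂ) (X : Cn n), h (t • X) = ‖t‖ * h X

/-- A ℂ-norm on ℂⁿ. -/
def IsCNorm {n : ℕ} (h : Cn n → ℝ) : Prop :=
  IsCSeminorm h ∧ ∀ X, h X = 0 → X = 0

/-- A positive semidefinite Hermitian sesquilinear form on ℂⁿ,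
linear in the first variable (convention ⟨z,w⟩ = Σ zⱼ conj wⱼ). -/
structure HermForm (n : ℕ) where
  s : Cn n → Cn n → ℂ
  add_left : ∀ X Y Z, s (X + Y) Z = s X Z + s Y Z
  smul_left : ∀ (t : ℂ) (X Y : Cn n), s (t • X) Y = t * s X Y
  conj_symm : ∀ X Y, s Y X = conj (s X Y)
  nonneg : ∀ X, 0 ≤ (s X X).re

/-- Positive definiteness. -/
def HermForm.PosDef {n : ℕ} (s : HermForm n) : Prop := ∀ X, X ≠ 0 → 0 < (s.s X X).re

/-- q_s(X) = √ s(X,X). -/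
def HermForm.q {n : ℕ} (s : HermForm n) (X : Cn n) : ℝ := Real.sqrt (s.s X X).re

/-- The open unit ball E(s). -/
def HermForm.ball {n : ℕ} (s : HermForm n) : Set (Cn n) := {X | (s.s X X).re < 1}

/-- `s` is a minimal-volume positive definite Hermitian product with q_s ≤ h,
i.e. `s = s^h`. -/
def IsMinimalProd {n : ℕ} (h : Cn n → ℝ) (s : HermForm n) : Prop :=
  s.PosDef ∧ (∀ X, s.q X ≤ h X) ∧
    ∀ s' : HermForm n, s'.PosDef → (∀ X, s'.q X ≤ h X) →
      volume s.ball ≤ volume s'.ball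

/-! In the standard basis let `s` have Gram matrix `[[a, b], [conj b, d]]`. Its unit ball is the
preimage of the Euclidean ball under a triangular Cholesky factor, so its volume is
`vol B / (a d - |b|²)`: the minimal form `s^h` maximizes the Gram determinant among the admissible
forms `q_s ≤ h`. The diagonal form with entries `1 / (2 ε²)` and `1 / (2 (1 - ε²))` is admissible
(its square is a convex combination of `‖X‖²` and `|X₀|² / ε²`) with determinant
`1 / (4 ε² (1 - ε²)) > 1`. On the other hand, if `d = q_s(e₁)² ≥ 1`, testing `q_s ≤ h` at
`(1, ±w)` with `|w|² = 1 / ε² - 1`, where `h = 1 / ε`, gives `a + d |w|² ≤ 1 + |w|²`, whence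
`a d - |b|² ≤ a d ≤ 1`. So `q_s(e₁) < 1`. -/

namespace HermForm

variable {n : ℕ} (s : HermForm n)

lemma add_right (X Y Z : Cn n) : s.s X (Y + Z) = s.s X Y + s.s X Z := by
  rw [s.conj_symm, s.add_left, map_add, ← s.conj_symm, ← s.conj_symm]

lemma smul_right (t : ℂ) (X Y : Cn n) : s.s X (t • Y) = conj t * s.s X Y := by
  rw [s.conj_symm, s.smul_left, map_mul, ← s.conj_symm]

lemma re_self_le_sq_of_q_le {X : Cn n} {r : ℝ} (h : s.q X ≤ r) : (s.s X X).re ≤ r ^ 2 :=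
  (Real.sqrt_le_iff.1 h).2

end HermForm

section

local notation "e₀" => (EuclideanSpace.single 0 1 : Cn 2)
local notation "e₁" => (EuclideanSpace.single 1 1 : Cn 2)

lemma norm_sq_eq_normSq_add_normSq (X : Cn 2) : ‖X‖ ^ 2 = normSq (X 0) + normSq (X 1) := by
  simp [EuclideanSpace.norm_sq_eq, Fin.sum_univ_two, Complex.sq_norm]

lemma eq_smul_single_add_smul_single (X : Cn 2) : X = X 0 • e₀ + X 1 • e₁ := by
  ext i; fin_cases i <;> simp

namespace HermForm

lemma re_self_eq (s : HermForm 2) (X : Cn 2) :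
    (s.s X X).re = (s.s e₀ e₀).re * normSq (X 0) + (s.s e₁ e₁).re * normSq (X 1)
      + 2 * (s.s e₀ e₁ * (X 0 * conj (X 1))).re := by
  conv_lhs => rw [eq_smul_single_add_smul_single X]
  simp only [s.add_left, s.add_right, s.smul_left, s.smul_right, s.conj_symm e₁ e₀]
  simp only [Complex.add_re, Complex.mul_re, Complex.conj_re, Complex.conj_im,
    Complex.normSq_apply, Complex.mul_im]
  ring

def gramDet (s : HermForm 2) : ℝ := (s.s e₀ e₀).re * (s.s e₁ e₁).re - normSq (s.s e₀ e₁)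

lemma volume_setOf_quadratic_lt_one {a d : ℝ} {b : ℂ} (ha : 0 < a) (hD : 0 < a * d - normSq b) :
    volume {X : Cn 2 | a * normSq (X 0) + d * normSq (X 1) + 2 * (b * (X 0 * conj (X 1))).re < 1}
      = ENNReal.ofReal (a * d - normSq b)⁻¹ * volume (Metric.ball (0 : Cn 2) 1) := by
  set D := a * d - normSq b
  set u := √a
  set v := √(D / a)
  have hu : u ^ 2 = a := Real.sq_sqrt ha.le
  have hv : v ^ 2 = D / a := Real.sq_sqrt (by positivity)
  have hu0 : (u : ℂ) ≠ 0 := by exact_mod_cast (Real.sqrt_pos.2 ha).ne'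
  -- Cholesky: the quadratic form is `‖f X‖ ^ 2` for the upper triangular `f` below
  let f : Cn 2 →ₗ[ℝ] Cn 2 :=
    (Matrix.toLpLin 2 2 !![(u : ℂ), conj b / u; 0, (v : ℂ)]).restrictScalars ℝ
  have hdet : LinearMap.det f = D := by
    rw [LinearMap.det_restrictScalars, LinearMap.det_toLpLin, Algebra.norm_complex_apply,
      Matrix.det_fin_two_of]
    simp only [mul_zero, sub_zero, ← Complex.ofReal_mul, Complex.normSq_ofReal]
    rw [← sq, mul_pow, hu, hv]
    field_simp
  have hf : ∀ X, ‖f X‖ ^ 2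
      = a * normSq (X 0) + d * normSq (X 1) + 2 * (b * (X 0 * conj (X 1))).re := by
    intro X
    have hcross : (u : ℂ) * X 0 * conj (conj b / u * X 1) = b * (X 0 * conj (X 1)) := by
      simp only [map_mul, map_div₀, Complex.conj_conj, Complex.conj_ofReal]
      field_simp
    have hf0 : f X 0 = u * X 0 + conj b / u * X 1 := by
      simp [f, Matrix.toLpLin_apply, dotProduct, Fin.sum_univ_two]
    have hf1 : f X 1 = v * X 1 := by
      simp [f, Matrix.toLpLin_apply, dotProduct, Fin.sum_univ_two]
    rw [norm_sq_eq_normSq_add_normSq, hf0, hf1, Complex.normSq_add, Complex.normSq_mul,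
      Complex.normSq_mul, Complex.normSq_mul, hcross, Complex.normSq_div, Complex.normSq_conj,
      Complex.normSq_ofReal, Complex.normSq_ofReal, ← sq, ← sq, hu, hv]
    field_simp
    ring
  have hset : {X : Cn 2 | a * normSq (X 0) + d * normSq (X 1)
      + 2 * (b * (X 0 * conj (X 1))).re < 1} = f ⁻¹' Metric.ball 0 1 := by
    ext X
    simp only [Set.mem_ofPred_eq, Set.mem_preimage, mem_ball_zero_iff, ← hf X]
    exact sq_lt_one_iff₀ (norm_nonneg _)
  rw [hset, Measure.addHaar_preimage_linearMap _ (hdet ▸ hD.ne'), hdet,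
    abs_of_pos (inv_pos.2 hD)]

lemma re_self_single_zero_pos {s : HermForm 2} (hs : s.PosDef) : 0 < (s.s e₀ e₀).re :=
  hs _ (by simp)

lemma gramDet_pos {s : HermForm 2} (hs : s.PosDef) : 0 < s.gramDet := by
  set a := (s.s e₀ e₀).re
  have ha : 0 < a := re_self_single_zero_pos hs
  -- `Y = (conj b, -a)` with `b = s e₀ e₁` has `s(Y, Y) = a * gramDet s`
  have hY := hs !₂[conj (s.s e₀ e₁), -a] (by simp [ha.ne'])
  rw [re_self_eq] at hY
  simp only [Matrix.cons_val_zero, Matrix.cons_val_one, Complex.normSq_conj, Complex.normSq_neg,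
    Complex.normSq_ofReal, map_neg, Complex.conj_ofReal, mul_neg, ← mul_assoc,
    Complex.mul_conj] at hY
  simp only [Complex.neg_re, Complex.mul_re, Complex.ofReal_re, Complex.ofReal_im] at hY
  unfold gramDet
  nlinarith

lemma volume_ball {s : HermForm 2} (hs : s.PosDef) :
    volume s.ball = ENNReal.ofReal s.gramDet⁻¹ * volume (Metric.ball (0 : Cn 2) 1) := by
  have hball : s.ball = {X : Cn 2 | (s.s e₀ e₀).re * normSq (X 0) + (s.s e₁ e₁).re * normSq (X 1)
      + 2 * (s.s e₀ e₁ * (X 0 * conj (X 1))).re < 1} := by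
    ext X
    rw [ball, Set.mem_ofPred_eq, Set.mem_ofPred_eq, re_self_eq]
  rw [hball]
  exact volume_setOf_quadratic_lt_one (re_self_single_zero_pos hs) (gramDet_pos hs)

lemma volume_ball_le_volume_ball_iff {s s' : HermForm 2} (hs : s.PosDef) (hs' : s'.PosDef) :
    volume s.ball ≤ volume s'.ball ↔ s'.gramDet ≤ s.gramDet := by
  rw [volume_ball hs, volume_ball hs', ENNReal.mul_le_mul_iff_left
    (Metric.measure_ball_pos volume 0 one_pos).ne' measure_ball_lt_top.ne,
    ENNReal.ofReal_le_ofReal_iff (inv_nonneg.2 (gramDet_pos hs').le),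
    inv_le_inv₀ (gramDet_pos hs) (gramDet_pos hs')]

def diag (α β : NNReal) : HermForm 2 where
  s X Y := (α : ℂ) * (X 0 * conj (Y 0)) + (β : ℂ) * (X 1 * conj (Y 1))
  add_left X Y Z := by simp only [PiLp.add_apply]; ring
  smul_left t X Y := by simp only [PiLp.smul_apply, smul_eq_mul]; ring
  conj_symm X Y := by simp only [map_add, map_mul, Complex.conj_conj, Complex.conj_ofReal]; ring
  nonneg X := by
    simp only [Complex.mul_conj, Complex.add_re, ← Complex.ofReal_mul, Complex.ofReal_re]
    exact add_nonneg (mul_nonneg α.2 (normSq_nonneg _)) (mul_nonneg β.2 (normSq_nonneg _))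

lemma diag_re_self (α β : NNReal) (X : Cn 2) :
    ((diag α β).s X X).re = α * normSq (X 0) + β * normSq (X 1) := by
  simp only [diag, Complex.mul_conj, Complex.add_re, ← Complex.ofReal_mul, Complex.ofReal_re]

lemma diag_posDef {α β : NNReal} (hα : 0 < α) (hβ : 0 < β) : (diag α β).PosDef := by
  intro X hX
  rw [diag_re_self]
  have hX' : X 0 ≠ 0 ∨ X 1 ≠ 0 := by
    by_contra! h
    exact hX (by rw [eq_smul_single_add_smul_single X, h.1, h.2, zero_smul, zero_smul, add_zero])
  rcases hX' with h | h
  · exact add_pos_of_pos_of_nonneg (mul_pos hα (normSq_pos.2 h)) (mul_nonneg β.2 (normSq_nonneg _))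
  · exact add_pos_of_nonneg_of_pos (mul_nonneg α.2 (normSq_nonneg _)) (mul_pos hβ (normSq_pos.2 h))

lemma gramDet_diag (α β : NNReal) : (diag α β).gramDet = α * β := by
  simp [gramDet, diag]

lemma gramDet_le_one_of_re_le {s : HermForm 2} {w : ℂ} (hw : 1 ≤ normSq w) (hd : 1 ≤ (s.s e₁ e₁).re)
    (h₁ : (s.s !₂[1, w] !₂[1, w]).re ≤ 1 + normSq w)
    (h₂ : (s.s !₂[1, -w] !₂[1, -w]).re ≤ 1 + normSq w) : s.gramDet ≤ 1 := by
  rw [re_self_eq] at h₁ h₂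
  simp only [Matrix.cons_val_zero, Matrix.cons_val_one, Complex.normSq_one, Complex.normSq_neg,
    map_neg, mul_neg, one_mul, mul_one, Complex.neg_re] at h₁ h₂
  set a := (s.s e₀ e₀).re
  set d := (s.s e₁ e₁).re
  -- the cross terms cancel in the average of the two test vectors
  have hsum : a + d * normSq w ≤ 1 + normSq w := by linarith
  have hsum' := mul_le_mul_of_nonneg_left hsum (by linarith : 0 ≤ d)
  have hprod : 0 ≤ (d - 1) * (d * normSq w - 1) := mul_nonneg (by linarith) (by nlinarith)
  unfold gramDet
  nlinarith [normSq_nonneg (s.s e₀ e₁)]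

lemma exists_posDef_q_le_max_norm_one_lt_gramDet {ε : ℝ} (hε : 0 < ε) (hε2 : ε ^ 2 < 1 / 2) :
    ∃ s : HermForm 2, s.PosDef ∧ (∀ X, s.q X ≤ max ‖X‖ (‖X 0‖ / ε)) ∧ 1 < s.gramDet := by
  have h1 : 0 < 1 - ε ^ 2 := by linarith
  have h2 : 0 < 1 - 2 * ε ^ 2 := by linarith
  let α : NNReal := ⟨1 / (2 * ε ^ 2), by positivity⟩
  let β : NNReal := ⟨1 / (2 * (1 - ε ^ 2)), by positivity⟩
  refine ⟨diag α β, diag_posDef (NNReal.coe_pos.1 (show (0 : ℝ) < 1 / (2 * ε ^ 2) by positivity))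
    (NNReal.coe_pos.1 (show (0 : ℝ) < 1 / (2 * (1 - ε ^ 2)) by positivity)), fun X => ?_, ?_⟩
  · set M := max ‖X‖ (‖X 0‖ / ε)
    have hM₁ : ‖X‖ ^ 2 ≤ M ^ 2 := pow_le_pow_left₀ (norm_nonneg _) (le_max_left _ _) 2
    have hM₂ : (‖X 0‖ / ε) ^ 2 ≤ M ^ 2 := pow_le_pow_left₀ (by positivity) (le_max_right _ _) 2
    rw [norm_sq_eq_normSq_add_normSq] at hM₁
    rw [div_pow, Complex.sq_norm] at hM₂
    -- `q²` is the convex combination `λ ‖X‖² + (1 - λ) (‖X 0‖ / ε)²` with `λ = 1 / (2 (1 - ε²))`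
    have hre : ((diag α β).s X X).re
        = 1 / (2 * (1 - ε ^ 2)) * (normSq (X 0) + normSq (X 1))
          + (1 - 2 * ε ^ 2) / (2 * (1 - ε ^ 2)) * (normSq (X 0) / ε ^ 2) := by
      rw [diag_re_self]
      change 1 / (2 * ε ^ 2) * _ + 1 / (2 * (1 - ε ^ 2)) * _ = _
      field_simp
      ring
    rw [q, Real.sqrt_le_left (by positivity), hre]
    calc _ ≤ 1 / (2 * (1 - ε ^ 2)) * M ^ 2 + (1 - 2 * ε ^ 2) / (2 * (1 - ε ^ 2)) * M ^ 2 := by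
          gcongr
      _ = M ^ 2 := by field_simp; ring
  · rw [gramDet_diag]
    show 1 < 1 / (2 * ε ^ 2) * (1 / (2 * (1 - ε ^ 2)))
    rw [div_mul_div_comm, one_mul, lt_div_iff₀ (by positivity)]
    nlinarith [sq_pos_of_pos h2]

lemma max_norm_sq_of_normSq_eq {ε : ℝ} (hε : 0 < ε) {w : ℂ} (hw : normSq w = 1 / ε ^ 2 - 1) :
    max ‖(!₂[1, w] : Cn 2)‖ (‖(!₂[1, w] : Cn 2) 0‖ / ε) ^ 2 = 1 + normSq w := by
  have hX : ‖(!₂[1, w] : Cn 2)‖ = 1 / ε := by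
    rw [← sq_eq_sq₀ (norm_nonneg _) (by positivity), norm_sq_eq_normSq_add_normSq]
    simp [hw]
  simp [hX, hw]

lemma gramDet_le_one_of_re_le_max_norm_sq {ε : ℝ} (hε : 0 < ε) (hε2 : ε ^ 2 ≤ 1 / 2)
    {s : HermForm 2} (hs : ∀ X, (s.s X X).re ≤ max ‖X‖ (‖X 0‖ / ε) ^ 2)
    (hd : 1 ≤ (s.s e₁ e₁).re) : s.gramDet ≤ 1 := by
  have hc : 1 ≤ 1 / ε ^ 2 - 1 := by
    rw [le_sub_iff_add_le, le_div_iff₀ (by positivity)]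
    linarith
  set w : ℂ := ((√(1 / ε ^ 2 - 1) : ℝ) : ℂ)
  have hw : normSq w = 1 / ε ^ 2 - 1 := by
    rw [normSq_ofReal, ← sq, Real.sq_sqrt (by linarith)]
  refine gramDet_le_one_of_re_le (hw ▸ hc) hd ?_ ?_
  · rw [← max_norm_sq_of_normSq_eq hε hw]
    exact hs _
  · rw [← normSq_neg w, ← max_norm_sq_of_normSq_eq hε (w := -w) (by rwa [normSq_neg])]
    exact hs _

end HermForm

end

theorem stmt14 (ε : ℝ) (hε : 0 < ε) (hε2 : ε < 1 / Real.sqrt 2)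
    (h : Cn 2 → ℝ) (hdef : ∀ X, h X = max ‖X‖ (‖X 0‖ / ε))
    (s : HermForm 2) (hs : IsMinimalProd h s) :
    (∀ X : Cn 2, ‖X‖ ≤ h X) ∧
    Real.sqrt 2 * s.q (EuclideanSpace.single 1 1) < Real.sqrt 2 ∧
    ¬ (∀ X : Cn 2, Real.sqrt 2 * ‖X‖ ≤ Real.sqrt 2 * s.q X) := by
  obtain ⟨hpos, hle, hmin⟩ := hs
  obtain rfl : h = fun X => max ‖X‖ (‖X 0‖ / ε) := funext hdef
  have hε_sq : ε ^ 2 < 1 / 2 := by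
    simpa [div_pow] using pow_lt_pow_left₀ hε2 hε.le two_ne_zero
  have hq : s.q (EuclideanSpace.single 1 1) < 1 := by
    obtain ⟨s', hs', hs'le, hs'det⟩ := HermForm.exists_posDef_q_le_max_norm_one_lt_gramDet hε hε_sq
    have hdet := (HermForm.volume_ball_le_volume_ball_iff hpos hs').1 (hmin s' hs' hs'le)
    by_contra! hq_ge
    have := HermForm.gramDet_le_one_of_re_le_max_norm_sq hε hε_sq.le
      (fun X => s.re_self_le_sq_of_q_le (hle X)) (Real.one_le_sqrt.1 hq_ge)
    linarith
  have h2 : 0 < Real.sqrt 2 := Real.sqrt_pos.2 two_pos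
  refine ⟨fun X => le_max_left _ _, by nlinarith, fun hmono => ?_⟩
  have := hmono (EuclideanSpace.single 1 1)
  simp only [EuclideanSpace.single, PiLp.norm_single, norm_one] at this
  nlinarith
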